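/- arXiv:0704.1503 — 3 statements merged into one kernel-verified Lean document; each statement's English description precedes it below -/
import Mathlib

section
/- For every n ≥ 1 and 0 ≤ a ≤ n, the map d_{a,n} : V_a^n → (V_{n−a}^n)^* is bijective, hence an isomorphism of 𝔸-vector spaces (and of U_q(sl_n)-modules). -/
noncomputable section

open scoped TensorProduct

set_option maxHeartbeats 1000000
set_option synthInstance.maxHeartbeats 400000

/-- The ground field `𝔸 = ℚ(q)`. -/
abbrev A : Type := RatFunc ℚ

/-- The element `q ∈ 𝔸`. -/
def qq : A := RatFunc.X

/-- The set of `a`-element subsets of `{0, 1, …, n-1}` (a model for the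
`a`-element subsets of `{1, …, n}`), the basis of `V_a^n`. -/
abbrev BS (n a : ℕ) : Type := {s : Finset ℕ // s ⊆ Finset.range n ∧ s.card = a}

instance BS.fintype (n a : ℕ) : Fintype (BS n a) :=
  Fintype.subtype ((Finset.range n).powerset.filter fun s => s.card = a) (by
    intro s
    simp [Finset.mem_powerset, Finset.mem_filter])

/-- The fundamental representation `V_a^n`, as the `𝔸`-vector space with basis the
`a`-element subsets of an `n`-element set. -/
abbrev V (n a : ℕ) : Type := BS n a → A

/-- `i₋₁ : V_{a-1}^{n-1} → V_a^n` (here with indices shifted: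
`iminus n a : V_a^n → V_{a+1}^{n+1}`), the inclusion of the summand of subsets containing
the new top element `n`. -/
def iminus (n a : ℕ) : V n a →ₗ[A] V (n+1) (a+1) where
  toFun f s := if h : n ∈ s.1 then
      f ⟨s.1.erase n, by
        constructor
        · intro x hx
          have hx' := Finset.mem_erase.mp hx
          have hx2 := s.2.1 hx'.2
          simp only [Finset.mem_range] at hx2 ⊢
          omega
        · rw [Finset.card_erase_of_mem h, s.2.2]; omega⟩
    else 0
  map_add' f g := by
    funext s
    simp only [Pi.add_apply]
    by_cases h : n ∈ s.1 <;> simp [h]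
  map_smul' c f := by
    funext s
    simp only [Pi.smul_apply, smul_eq_mul, RingHom.id_apply]
    by_cases h : n ∈ s.1 <;> simp [h]

/-- `i₀ : V_a^{n-1} → V_a^n` (as `izero n a : V_a^n → V_a^{n+1}`), the inclusion of the
summand of subsets not containing the new top element. -/
def izero (n a : ℕ) : V n a →ₗ[A] V (n+1) a where
  toFun f s := if h : n ∈ s.1 then 0 else
      f ⟨s.1, by
        refine ⟨fun x hx => ?_, s.2.2⟩
        have hx2 := s.2.1 hx
        simp only [Finset.mem_range] at hx2 ⊢
        rcases Nat.lt_succ_iff_lt_or_eq.mp hx2 with h' | h'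
        · exact h'
        · exact absurd (h' ▸ hx) h⟩
  map_add' f g := by
    funext s
    simp only [Pi.add_apply]
    by_cases h : n ∈ s.1 <;> simp [h]
  map_smul' c f := by
    funext s
    simp only [Pi.smul_apply, smul_eq_mul, RingHom.id_apply]
    by_cases h : n ∈ s.1 <;> simp [h]

/-- `p₋₁ : V_a^n → V_{a-1}^{n-1}` (as `pminus n a : V_{a+1}^{n+1} → V_a^n`), the projection
onto the summand of subsets containing the top element. -/
def pminus (n a : ℕ) : V (n+1) (a+1) →ₗ[A] V n a where
  toFun f t := f ⟨insert n t.1, by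
    have hn : n ∉ t.1 := fun h => by
      have := t.2.1 h; simp [Finset.mem_range] at this
    constructor
    · intro x hx
      rcases Finset.mem_insert.mp hx with rfl | hx
      · simp
      · have := t.2.1 hx; simp only [Finset.mem_range] at this ⊢; omega
    · rw [Finset.card_insert_of_notMem hn, t.2.2]⟩
  map_add' f g := rfl
  map_smul' c f := rfl

/-- `p₀ : V_a^n → V_a^{n-1}` (as `pzero n a : V_a^{n+1} → V_a^n`), the projection onto the
summand of subsets not containing the top element. -/
def pzero (n a : ℕ) : V (n+1) a →ₗ[A] V n a where
  toFun f t := f ⟨t.1, by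
    refine ⟨fun x hx => ?_, t.2.2⟩
    have := t.2.1 hx; simp only [Finset.mem_range] at this ⊢; omega⟩
  map_add' f g := rfl
  map_smul' c f := rfl

/-- The diagonal operator on `V_a^n` acting by the scalar `x` on basis subsets containing `m`
and by `y` on those not containing `m`; for `m = n-1` this is `x • i₋₁ p₋₁ + y • i₀ p₀`. -/
def diagOp (n a m : ℕ) (x y : A) : Module.End A (V n a) where
  toFun f s := (if m ∈ s.1 then x else y) * f s
  map_add' f g := by
    funext s
    simp only [Pi.add_apply]
    ring
  map_smul' c f := by
    funext s
    simp only [Pi.smul_apply, smul_eq_mul, RingHom.id_apply]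
    ring

/-- The recursively defined action of the generator `X_i^+` on `V_a^n`
(`XpOp n a i`, where `i` is the literal subscript, `1 ≤ i ≤ n-1`). -/
def XpOp : (n a i : ℕ) → Module.End A (V n a)
  | 0, _, _ => 0
  | 1, _, _ => 0
  | _+2, 0, _ => 0
  | n+2, a+1, i =>
    if a + 1 = n + 2 then 0
    else if i = n + 1 then
      (iminus (n+1) a) ∘ₗ (izero n a) ∘ₗ (pminus n a) ∘ₗ (pzero (n+1) (a+1))
    else
      (iminus (n+1) a) ∘ₗ (XpOp (n+1) a i) ∘ₗ (pminus (n+1) a)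
      + (izero (n+1) (a+1)) ∘ₗ (XpOp (n+1) (a+1) i) ∘ₗ (pzero (n+1) (a+1))

/-- The recursively defined action of the generator `X_i^-` on `V_a^n`. -/
def XmOp : (n a i : ℕ) → Module.End A (V n a)
  | 0, _, _ => 0
  | 1, _, _ => 0
  | _+2, 0, _ => 0
  | n+2, a+1, i =>
    if a + 1 = n + 2 then 0
    else if i = n + 1 then
      (izero (n+1) (a+1)) ∘ₗ (iminus n a) ∘ₗ (pzero n a) ∘ₗ (pminus (n+1) a)
    else
      (iminus (n+1) a) ∘ₗ (XmOp (n+1) a i) ∘ₗ (pminus (n+1) a)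
      + (izero (n+1) (a+1)) ∘ₗ (XmOp (n+1) (a+1) i) ∘ₗ (pzero (n+1) (a+1))

/-- The recursively defined action of the generator `K_i` on `V_a^n`.  The middle factors
`diagOp … 1 q` and `diagOp … q⁻¹ 1` are the operators `i₋₁ p₋₁ + q i₀ p₀` and
`q⁻¹ i₋₁ p₋₁ + i₀ p₀` of the recursion. -/
def KOp : (n a i : ℕ) → Module.End A (V n a)
  | 0, _, _ => 1
  | 1, _, _ => 1
  | _+2, 0, _ => 1
  | n+2, a+1, i =>
    if a + 1 = n + 2 then 1
    else if i = n + 1 then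
      (iminus (n+1) a) ∘ₗ (diagOp (n+1) a n 1 qq) ∘ₗ (pminus (n+1) a)
      + (izero (n+1) (a+1)) ∘ₗ (diagOp (n+1) (a+1) n qq⁻¹ 1) ∘ₗ (pzero (n+1) (a+1))
    else
      (iminus (n+1) a) ∘ₗ (KOp (n+1) a i) ∘ₗ (pminus (n+1) a)
      + (izero (n+1) (a+1)) ∘ₗ (KOp (n+1) (a+1) i) ∘ₗ (pzero (n+1) (a+1))

/-- The recursively defined action of `K_i⁻¹` on `V_a^n` (the inverse of `KOp`),
given by the same recursion with `q` and `q⁻¹` interchanged. -/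
def KinvOp : (n a i : ℕ) → Module.End A (V n a)
  | 0, _, _ => 1
  | 1, _, _ => 1
  | _+2, 0, _ => 1
  | n+2, a+1, i =>
    if a + 1 = n + 2 then 1
    else if i = n + 1 then
      (iminus (n+1) a) ∘ₗ (diagOp (n+1) a n 1 qq⁻¹) ∘ₗ (pminus (n+1) a)
      + (izero (n+1) (a+1)) ∘ₗ (diagOp (n+1) (a+1) n qq 1) ∘ₗ (pzero (n+1) (a+1))
    else
      (iminus (n+1) a) ∘ₗ (KinvOp (n+1) a i) ∘ₗ (pminus (n+1) a)
      + (izero (n+1) (a+1)) ∘ₗ (KinvOp (n+1) (a+1) i) ∘ₗ (pzero (n+1) (a+1))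
/-! ### The quantum group `U_q(sl_n)` by generators and relations.

We present the algebra with `m = n - 1` generators of each kind `K i, K i⁻¹, X i⁺, X i⁻`,
indexed by `i : Fin m` (so `i` corresponds to the subscript `i + 1 ∈ {1, …, n-1}`). -/

/-- Generators of `U_q(sl_n)` (with `m = n-1`). -/
inductive UqGen (m : ℕ) : Type
  | K : Fin m → UqGen m
  | Kinv : Fin m → UqGen m
  | Xp : Fin m → UqGen m
  | Xm : Fin m → UqGen m

/-- The free `𝔸`-algebra on the generators. -/
abbrev FA (m : ℕ) : Type := FreeAlgebra A (UqGen m)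

namespace FA
variable {m : ℕ}
def K (i : Fin m) : FA m := FreeAlgebra.ι A (UqGen.K i)
def Kinv (i : Fin m) : FA m := FreeAlgebra.ι A (UqGen.Kinv i)
def Xp (i : Fin m) : FA m := FreeAlgebra.ι A (UqGen.Xp i)
def Xm (i : Fin m) : FA m := FreeAlgebra.ι A (UqGen.Xm i)
end FA

/-- The Cartan integers `(i,j)` of type `A_m`: `2` if `i = j`, `-1` if `|i-j| = 1`,
`0` if `|i-j| ≥ 2`. -/
def cart {m : ℕ} (i j : Fin m) : ℤ :=
  if i = j then 2 else if (i : ℕ) + 1 = j ∨ (j : ℕ) + 1 = i then -1 else 0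

/-- The defining relations of `U_q(sl_n)`. -/
inductive uqRel (m : ℕ) : FA m → FA m → Prop
  | KKinv (i : Fin m) : uqRel m (FA.K i * FA.Kinv i) 1
  | KinvK (i : Fin m) : uqRel m (FA.Kinv i * FA.K i) 1
  | KK (i j : Fin m) : uqRel m (FA.K i * FA.K j) (FA.K j * FA.K i)
  | KXp (i j : Fin m) : uqRel m (FA.K i * FA.Xp j) (qq ^ (cart i j) • (FA.Xp j * FA.K i))
  | KXm (i j : Fin m) : uqRel m (FA.K i * FA.Xm j) (qq ^ (-cart i j) • (FA.Xm j * FA.K i))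
  | XpXm (i j : Fin m) :
      uqRel m (FA.Xp i * FA.Xm j - FA.Xm j * FA.Xp i)
        (if i = j then (qq - qq⁻¹)⁻¹ • (FA.K i - FA.Kinv i) else 0)
  | XpXp (i j : Fin m) (h : (i : ℕ) + 2 ≤ j ∨ (j : ℕ) + 2 ≤ i) :
      uqRel m (FA.Xp i * FA.Xp j) (FA.Xp j * FA.Xp i)
  | XmXm (i j : Fin m) (h : (i : ℕ) + 2 ≤ j ∨ (j : ℕ) + 2 ≤ i) :
      uqRel m (FA.Xm i * FA.Xm j) (FA.Xm j * FA.Xm i)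
  | serreP (i j : Fin m) (h : (i : ℕ) + 1 = j ∨ (j : ℕ) + 1 = i) :
      uqRel m (FA.Xp i ^ 2 * FA.Xp j - (qq + qq⁻¹) • (FA.Xp i * FA.Xp j * FA.Xp i)
        + FA.Xp j * FA.Xp i ^ 2) 0
  | serreM (i j : Fin m) (h : (i : ℕ) + 1 = j ∨ (j : ℕ) + 1 = i) :
      uqRel m (FA.Xm i ^ 2 * FA.Xm j - (qq + qq⁻¹) • (FA.Xm i * FA.Xm j * FA.Xm i)
        + FA.Xm j * FA.Xm i ^ 2) 0

/-- The quantum group `U_q(sl_{m+1})`, presented by generators and relations.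
For `U_q(sl_n)` take `m = n - 1`. -/
abbrev Uq (m : ℕ) : Type := RingQuot (uqRel m)

namespace Uq
variable {m : ℕ}
/-- The generator `K_{i+1}` of `U_q(sl_n)`. -/
def K (i : Fin m) : Uq m := RingQuot.mkAlgHom A (uqRel m) (FA.K i)
/-- The generator `K_{i+1}⁻¹` of `U_q(sl_n)`. -/
def Kinv (i : Fin m) : Uq m := RingQuot.mkAlgHom A (uqRel m) (FA.Kinv i)
/-- The generator `X_{i+1}^+` of `U_q(sl_n)`. -/
def Xp (i : Fin m) : Uq m := RingQuot.mkAlgHom A (uqRel m) (FA.Xp i)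
/-- The generator `X_{i+1}^-` of `U_q(sl_n)`. -/
def Xm (i : Fin m) : Uq m := RingQuot.mkAlgHom A (uqRel m) (FA.Xm i)
end Uq
/-! ### The duality maps `d_{a,n}`, triple invariants, and the pivotal elements `τ`. -/

/-- The sum-of-coefficients functional on `V_a^n`. -/
def sumF (n a : ℕ) : V n a →ₗ[A] A where
  toFun f := ∑ s : BS n a, f s
  map_add' f g := by simp [Finset.sum_add_distrib]
  map_smul' c f := by simp [Finset.mul_sum]

/-- The "trivial" map `V_a^n → (V_c^n)^*`; when `V_a^n` and `V_c^n` are one-dimensional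
(`a = 0` or `a = n`, and correspondingly for `c`) it sends the basis vector to the dual
basis vector.  Used for the base cases of `d_{a,n}`. -/
def dtriv (n a c : ℕ) : V n a →ₗ[A] Module.Dual A (V n c) :=
  LinearMap.smulRight (sumF n a) (sumF n c)

/-- The map `d_{a,n} : V_a^n → (V_{n-a}^n)^*`, defined recursively by
`d_{a,n} = i₀ ∘ d_{a-1,n-1} ∘ p₋₁ + (-q)^{-a} i₋₁ ∘ d_{a,n-1} ∘ p₀`, with both base cases
sending the basis vector to the dual basis vector.  Here `dmap n a c` has target
`(V_c^n)^*`, to be used with `c = n - a`. -/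
def dmap : (n a c : ℕ) → (V n a →ₗ[A] Module.Dual A (V n c))
  | 0, a, c => dtriv 0 a c
  | n+1, 0, c => dtriv (n+1) 0 c
  | n+1, a+1, c =>
    if a + 1 = n + 1 then dtriv (n+1) (a+1) c
    else
      match c with
      | 0 => 0
      | c+1 =>
        (pzero n (c+1)).dualMap ∘ₗ (dmap n a (c+1)) ∘ₗ (pminus n a)
        + ((-qq) ^ (a+1))⁻¹ •
            ((pminus n c).dualMap ∘ₗ (dmap n (a+1) c) ∘ₗ (pzero n (a+1)))

section voutvin

open TensorProduct

/-- First term of the recursion for `v_out`: `(-1)^c q^{b+c} (i₋₁ ⊗ i₀ ⊗ i₀)`. -/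
def vterm1 (n a b c : ℕ) (v : V n a ⊗[A] (V n b ⊗[A] V n c)) :
    V (n+1) (a+1) ⊗[A] (V (n+1) b ⊗[A] V (n+1) c) :=
  ((-1 : A)^c * qq^(b+c)) •
    (TensorProduct.map (iminus n a) (TensorProduct.map (izero n b) (izero n c)) v)

/-- Second term of the recursion for `v_out`: `(-1)^a q^c (i₀ ⊗ i₋₁ ⊗ i₀)`. -/
def vterm2 (n a b c : ℕ) (v : V n a ⊗[A] (V n b ⊗[A] V n c)) :
    V (n+1) a ⊗[A] (V (n+1) (b+1) ⊗[A] V (n+1) c) :=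
  ((-1 : A)^a * qq^c) •
    (TensorProduct.map (izero n a) (TensorProduct.map (iminus n b) (izero n c)) v)

/-- Third term of the recursion for `v_out`: `(-1)^b (i₀ ⊗ i₀ ⊗ i₋₁)`. -/
def vterm3 (n a b c : ℕ) (v : V n a ⊗[A] (V n b ⊗[A] V n c)) :
    V (n+1) a ⊗[A] (V (n+1) b ⊗[A] V (n+1) (c+1)) :=
  ((-1 : A)^b) •
    (TensorProduct.map (izero n a) (TensorProduct.map (izero n b) (iminus n c)) v)

/-- The triple invariant `v_out^n_{a,b,c} ∈ V_a^n ⊗ V_b^n ⊗ V_c^n` (intended for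
`a + b + c = n`), defined by the recursion of Definition `defn:trivalent-vertices`,
omitting any term with a negative subscript. -/
def voutE : (n a b c : ℕ) → V n a ⊗[A] (V n b ⊗[A] V n c)
  | 0, _, _, _ => (fun _ => (1:A)) ⊗ₜ[A] ((fun _ => (1:A)) ⊗ₜ[A] (fun _ => (1:A)))
  | n+1, 0, 0, 0 => 0
  | n+1, a+1, 0, 0 => vterm1 n a 0 0 (voutE n a 0 0)
  | n+1, 0, b+1, 0 => vterm2 n 0 b 0 (voutE n 0 b 0)
  | n+1, 0, 0, c+1 => vterm3 n 0 0 c (voutE n 0 0 c)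
  | n+1, a+1, b+1, 0 =>
      vterm1 n a (b+1) 0 (voutE n a (b+1) 0) + vterm2 n (a+1) b 0 (voutE n (a+1) b 0)
  | n+1, a+1, 0, c+1 =>
      vterm1 n a 0 (c+1) (voutE n a 0 (c+1)) + vterm3 n (a+1) 0 c (voutE n (a+1) 0 c)
  | n+1, 0, b+1, c+1 =>
      vterm2 n 0 b (c+1) (voutE n 0 b (c+1)) + vterm3 n 0 (b+1) c (voutE n 0 (b+1) c)
  | n+1, a+1, b+1, c+1 =>
      vterm1 n a (b+1) (c+1) (voutE n a (b+1) (c+1))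
      + vterm2 n (a+1) b (c+1) (voutE n (a+1) b (c+1))
      + vterm3 n (a+1) (b+1) c (voutE n (a+1) (b+1) c)

/-- First term of the recursion for `v_in`: `(-1)^c (…) ∘ (p₋₁ ⊗ p₀ ⊗ p₀)`. -/
def wterm1 (n a b c : ℕ) (φ : V n a ⊗[A] (V n b ⊗[A] V n c) →ₗ[A] A) :
    V (n+1) (a+1) ⊗[A] (V (n+1) b ⊗[A] V (n+1) c) →ₗ[A] A :=
  ((-1 : A)^c) •
    (φ ∘ₗ TensorProduct.map (pminus n a) (TensorProduct.map (pzero n b) (pzero n c)))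

/-- Second term of the recursion for `v_in`: `(-1)^a q^{-a} (…) ∘ (p₀ ⊗ p₋₁ ⊗ p₀)`. -/
def wterm2 (n a b c : ℕ) (φ : V n a ⊗[A] (V n b ⊗[A] V n c) →ₗ[A] A) :
    V (n+1) a ⊗[A] (V (n+1) (b+1) ⊗[A] V (n+1) c) →ₗ[A] A :=
  ((-1 : A)^a * (qq^a)⁻¹) •
    (φ ∘ₗ TensorProduct.map (pzero n a) (TensorProduct.map (pminus n b) (pzero n c)))

/-- Third term of the recursion for `v_in`: `(-1)^b q^{-a-b} (…) ∘ (p₀ ⊗ p₀ ⊗ p₋₁)`. -/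
def wterm3 (n a b c : ℕ) (φ : V n a ⊗[A] (V n b ⊗[A] V n c) →ₗ[A] A) :
    V (n+1) a ⊗[A] (V (n+1) b ⊗[A] V (n+1) (c+1)) →ₗ[A] A :=
  ((-1 : A)^b * (qq^(a+b))⁻¹) •
    (φ ∘ₗ TensorProduct.map (pzero n a) (TensorProduct.map (pzero n b) (pminus n c)))

/-- The triple coinvariant `v_in^n_{a,b,c} : V_a^n ⊗ V_b^n ⊗ V_c^n → 𝔸` (intended for
`a + b + c = n`), defined recursively, omitting any term with a negative subscript. -/
def vinE : (n a b c : ℕ) → (V n a ⊗[A] (V n b ⊗[A] V n c) →ₗ[A] A)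
  | 0, a, b, c =>
      (LinearMap.mul' A A) ∘ₗ
        TensorProduct.map (sumF 0 a)
          ((LinearMap.mul' A A) ∘ₗ TensorProduct.map (sumF 0 b) (sumF 0 c))
  | n+1, 0, 0, 0 => 0
  | n+1, a+1, 0, 0 => wterm1 n a 0 0 (vinE n a 0 0)
  | n+1, 0, b+1, 0 => wterm2 n 0 b 0 (vinE n 0 b 0)
  | n+1, 0, 0, c+1 => wterm3 n 0 0 c (vinE n 0 0 c)
  | n+1, a+1, b+1, 0 =>
      wterm1 n a (b+1) 0 (vinE n a (b+1) 0) + wterm2 n (a+1) b 0 (vinE n (a+1) b 0)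
  | n+1, a+1, 0, c+1 =>
      wterm1 n a 0 (c+1) (vinE n a 0 (c+1)) + wterm3 n (a+1) 0 c (vinE n (a+1) 0 c)
  | n+1, 0, b+1, c+1 =>
      wterm2 n 0 b (c+1) (vinE n 0 b (c+1)) + wterm3 n 0 (b+1) c (vinE n 0 (b+1) c)
  | n+1, a+1, b+1, c+1 =>
      wterm1 n a (b+1) (c+1) (vinE n a (b+1) (c+1))
      + wterm2 n (a+1) b (c+1) (vinE n (a+1) b (c+1))
      + wterm3 n (a+1) (b+1) c (vinE n (a+1) (b+1) c)

end voutvin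

/-- The operator `∏_{j=1}^{n-1} K_j^j` on `V_a^n`. -/
def kjOp (n a : ℕ) : Module.End A (V n a) :=
  (List.ofFn fun i : Fin (n-1) => (KOp n a ((i : ℕ)+1)) ^ ((i : ℕ)+1)).prod

/-- The pivotal operator `τ_n = ∏_{j=1}^{n-1} K_j^{j(n-j)}` on `V_a^n`. -/
def tauOp (n a : ℕ) : Module.End A (V n a) :=
  (List.ofFn fun i : Fin (n-1) => (KOp n a ((i : ℕ)+1)) ^ (((i : ℕ)+1) * (n - ((i : ℕ)+1)))).prod

/-- The inverse pivotal operator `τ_n⁻¹ = ∏_{j=1}^{n-1} K_j^{-j(n-j)}` on `V_a^n`. -/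
def tauinvOp (n a : ℕ) : Module.End A (V n a) :=
  (List.ofFn fun i : Fin (n-1) => (KinvOp n a ((i : ℕ)+1)) ^ (((i : ℕ)+1) * (n - ((i : ℕ)+1)))).prod

/-- The element `τ_n = ∏_{j=1}^{n-1} K_j^{j(n-j)} ∈ U_q(sl_n)`. -/
def tauU (n : ℕ) : Uq (n-1) :=
  (List.ofFn fun i : Fin (n-1) => (Uq.K i) ^ (((i : ℕ)+1) * (n - ((i : ℕ)+1)))).prod

/-- The Cartan integers for literal subscripts `i, j ∈ {1, …, n-1}`. -/
def cartN (i j : ℕ) : ℤ :=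
  if i = j then 2 else if i + 1 = j ∨ j + 1 = i then -1 else 0

/-! On the basis of subsets, the two terms of the recursion for `d_{a,n}` have disjoint
supports: a subset containing the top element only sees the first term, one avoiding it only
the second. Inductively, `d_{a,n}` therefore sends the basis vector of a subset `S` to a nonzero
multiple (a power of `-q⁻¹`) of the dual basis vector of the complement of `S`. Its matrix is
thus a permutation matrix times an invertible diagonal one. -/

theorem LinearMap.bijective_of_single_eq_smul_proj {K ι κ : Type*} [Field K] [Fintype ι]
    [Fintype κ] [DecidableEq ι] (f : (ι → K) →ₗ[K] Module.Dual K (κ → K)) (e : ι ≃ κ)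
    (hf : ∀ i, ∃ c ≠ (0 : K), f (Pi.single i 1) = c • LinearMap.proj (e i)) :
    Function.Bijective f := by
  classical
  have hrange : ∀ j, LinearMap.proj j ∈ LinearMap.range f := fun j => by
    obtain ⟨c, hc, hcj⟩ := hf (e.symm j)
    refine ⟨c⁻¹ • Pi.single (e.symm j) 1, ?_⟩
    rw [map_smul, hcj, smul_smul, inv_mul_cancel₀ hc, one_smul, e.apply_symm_apply]
  have hsurj : Function.Surjective f := by
    rw [← LinearMap.range_eq_top, eq_top_iff, ← (Pi.basisFun K κ).dualBasis.span_eq,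
      Submodule.span_le]
    rintro _ ⟨j, rfl⟩
    have hdual : (Pi.basisFun K κ).dualBasis j = LinearMap.proj j := by ext; simp
    exact hdual ▸ hrange j
  have hdim : Module.finrank K (ι → K) = Module.finrank K (Module.Dual K (κ → K)) := by
    rw [Subspace.dual_finrank_eq, Module.finrank_fintype_fun_eq_card,
      Module.finrank_fintype_fun_eq_card, Fintype.card_congr e]
  exact ⟨(LinearMap.injective_iff_surjective_of_finrank_eq_finrank hdim).2 hsurj, hsurj⟩

namespace BS

variable {n a c : ℕ}

lemma top_notMem (t : BS n a) : n ∉ t.1 := fun h => by simpa using t.2.1 h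

def insertTop (t : BS n a) : BS (n+1) (a+1) :=
  ⟨insert n t.1, Finset.insert_subset (by simp) (t.2.1.trans (by simp)),
    by rw [Finset.card_insert_of_notMem (top_notMem t), t.2.2]⟩

def castSucc (t : BS n a) : BS (n+1) a :=
  ⟨t.1, t.2.1.trans (by simp), t.2.2⟩

def compl (h : a + c = n) (s : BS n a) : BS n c :=
  ⟨Finset.range n \ s.1, Finset.sdiff_subset, by
    rw [Finset.card_sdiff_of_subset s.2.1, Finset.card_range, s.2.2]; omega⟩

def complEquiv (h : a + c = n) : BS n a ≃ BS n c where
  toFun := compl h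
  invFun := compl (by omega)
  left_inv s := Subtype.ext (Finset.sdiff_sdiff_eq_self s.2.1)
  right_inv t := Subtype.ext (Finset.sdiff_sdiff_eq_self t.2.1)

lemma insertTop_injective : Function.Injective (insertTop : BS n a → BS (n+1) (a+1)) :=
  fun t u h => Subtype.ext <| by
    have := congrArg (fun s : BS (n+1) (a+1) => s.1.erase n) h
    simpa only [insertTop, Finset.erase_insert (top_notMem _)] using this

lemma castSucc_injective : Function.Injective (castSucc : BS n a → BS (n+1) a) :=
  fun _ _ h => Subtype.ext (congrArg (fun s : BS (n+1) a => s.1) h)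

lemma castSucc_ne_insertTop (t : BS n (a+1)) (u : BS n a) : castSucc t ≠ insertTop u :=
  fun h => top_notMem t ((Subtype.ext_iff.1 h).symm ▸ Finset.mem_insert_self n u.1)

lemma eq_insertTop_or_eq_castSucc (s : BS (n+1) (a+1)) :
    (∃ t, s = insertTop t) ∨ ∃ t, s = castSucc t := by
  by_cases hs : n ∈ s.1
  · left
    refine ⟨⟨s.1.erase n, fun x hx => ?_, ?_⟩, Subtype.ext (Finset.insert_erase hs).symm⟩
    · have := s.2.1 (Finset.mem_of_mem_erase hx)
      simp only [Finset.mem_range] at this ⊢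
      exact lt_of_le_of_ne (Nat.lt_succ_iff.1 this) (Finset.ne_of_mem_erase hx)
    · rw [Finset.card_erase_of_mem hs, s.2.2]; rfl
  · right
    refine ⟨⟨s.1, fun x hx => ?_, s.2.2⟩, rfl⟩
    have := s.2.1 hx
    simp only [Finset.mem_range] at this ⊢
    exact lt_of_le_of_ne (Nat.lt_succ_iff.1 this) (fun hx' => hs (hx' ▸ hx))

lemma compl_insertTop (h : a + 1 + c = n + 1) (t : BS n a) :
    compl h (insertTop t) = castSucc (compl (by omega) t) :=
  Subtype.ext <| by
    ext x
    simp only [compl, insertTop, castSucc, Finset.mem_sdiff, Finset.mem_range,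
      Finset.mem_insert]
    constructor
    · rintro ⟨hx, hxt⟩
      exact ⟨by omega, fun h' => hxt (Or.inr h')⟩
    · rintro ⟨hx, hxt⟩
      refine ⟨by omega, ?_⟩
      rintro (rfl | h')
      · omega
      · exact hxt h'

lemma compl_castSucc (h : a + (c + 1) = n + 1) (t : BS n a) :
    compl h (castSucc t) = insertTop (compl (by omega) t) :=
  Subtype.ext <| by
    ext x
    simp only [compl, insertTop, castSucc, Finset.mem_sdiff, Finset.mem_range,
      Finset.mem_insert]
    constructor
    · rintro ⟨hx, hxt⟩
      rcases Nat.lt_succ_iff_lt_or_eq.1 hx with hx | rfl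
      · exact Or.inr ⟨hx, hxt⟩
      · exact Or.inl rfl
    · rintro (rfl | ⟨hx, hxt⟩)
      · exact ⟨by omega, top_notMem t⟩
      · exact ⟨by omega, hxt⟩

instance subsingleton_zero : Subsingleton (BS n 0) :=
  ⟨fun s t => Subtype.ext (by rw [Finset.card_eq_zero.1 s.2.2, Finset.card_eq_zero.1 t.2.2])⟩

instance subsingleton_self : Subsingleton (BS n n) :=
  ⟨fun s t => Subtype.ext <| by
    rw [Finset.eq_of_subset_of_card_le s.2.1 (by simp [s.2.2]),
      Finset.eq_of_subset_of_card_le t.2.1 (by simp [t.2.2])]⟩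

end BS

section Projections

variable {n a : ℕ}

lemma pminus_apply (f : V (n+1) (a+1)) (t : BS n a) : pminus n a f t = f (BS.insertTop t) := rfl

lemma pzero_apply (f : V (n+1) a) (t : BS n a) : pzero n a f t = f (BS.castSucc t) := rfl

lemma pminus_single_insertTop (t : BS n a) (x : A) :
    pminus n a (Pi.single (BS.insertTop t) x) = Pi.single t x := by
  funext u
  simp only [pminus_apply, Pi.single_apply, BS.insertTop_injective.eq_iff]

lemma pminus_single_castSucc (t : BS n (a+1)) (x : A) :
    pminus n a (Pi.single (BS.castSucc t) x) = 0 := by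
  funext u
  simp [pminus_apply, (BS.castSucc_ne_insertTop t u).symm]

lemma pzero_single_castSucc (t : BS n a) (x : A) :
    pzero n a (Pi.single (BS.castSucc t) x) = Pi.single t x := by
  funext u
  simp only [pzero_apply, Pi.single_apply, BS.castSucc_injective.eq_iff]

lemma pzero_single_insertTop (t : BS n a) (x : A) :
    pzero n (a+1) (Pi.single (BS.insertTop t) x) = 0 := by
  funext u
  simp [pzero_apply, BS.castSucc_ne_insertTop u t]

lemma dualMap_pminus_proj (t : BS n a) :
    (pminus n a).dualMap (LinearMap.proj t) = LinearMap.proj (BS.insertTop t) :=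
  LinearMap.ext fun _ => rfl

lemma dualMap_pzero_proj (t : BS n a) :
    (pzero n a).dualMap (LinearMap.proj t) = LinearMap.proj (BS.castSucc t) :=
  LinearMap.ext fun _ => rfl

end Projections

lemma dtriv_single {n a c : ℕ} [Subsingleton (BS n c)] (s : BS n a) (t : BS n c) :
    dtriv n a c (Pi.single s 1) = LinearMap.proj t := by
  ext g
  simp [dtriv, sumF, Fintype.sum_subsingleton _ t]

theorem dmap_single_eq_smul_proj {n a c : ℕ} (h : a + c = n) (s : BS n a) :
    ∃ x ≠ (0 : A), dmap n a c (Pi.single s 1) = x • LinearMap.proj (BS.compl h s) := by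
  induction n generalizing a c with
  | zero =>
    obtain ⟨rfl, rfl⟩ : a = 0 ∧ c = 0 := by omega
    exact ⟨1, one_ne_zero, by rw [one_smul]; exact dtriv_single _ _⟩
  | succ n ih =>
    match a with
    | 0 =>
      obtain rfl : c = n + 1 := by omega
      exact ⟨1, one_ne_zero, by rw [one_smul]; exact dtriv_single _ _⟩
    | a + 1 =>
      by_cases htop : a + 1 = n + 1
      · obtain rfl : c = 0 := by omega
        refine ⟨1, one_ne_zero, ?_⟩
        rw [one_smul, dmap, if_pos htop]
        exact dtriv_single _ _
      obtain ⟨c, rfl⟩ : ∃ c', c = c' + 1 := ⟨c - 1, by omega⟩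
      rw [dmap, if_neg htop]
      simp only [LinearMap.add_apply, LinearMap.comp_apply, LinearMap.smul_apply]
      rcases BS.eq_insertTop_or_eq_castSucc s with ⟨t, rfl⟩ | ⟨t, rfl⟩
      · obtain ⟨x, hx, hdt⟩ := ih (a := a) (c := c + 1) (by omega) t
        refine ⟨x, hx, ?_⟩
        rw [pminus_single_insertTop, pzero_single_insertTop, hdt, map_zero, map_zero, smul_zero,
          add_zero, map_smul, dualMap_pzero_proj, BS.compl_insertTop]
      · obtain ⟨x, hx, hdt⟩ := ih (a := a + 1) (c := c) (by omega) t
        have hq : ((-qq) ^ (a + 1))⁻¹ ≠ 0 :=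
          inv_ne_zero (pow_ne_zero _ (neg_ne_zero.2 RatFunc.X_ne_zero))
        refine ⟨((-qq) ^ (a + 1))⁻¹ * x, mul_ne_zero hq hx, ?_⟩
        rw [pminus_single_castSucc, pzero_single_castSucc, hdt, map_zero, map_zero, zero_add,
          map_smul, dualMap_pminus_proj, BS.compl_castSucc, smul_smul]

theorem statement8_general (n : ℕ) (a : ℕ) (ha : a ≤ n) :
    Function.Bijective (dmap n a (n-a)) :=
  LinearMap.bijective_of_single_eq_smul_proj _ (BS.complEquiv (by omega))
    fun s => dmap_single_eq_smul_proj (by omega) s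

/-- for every `n ≥ 1` and `0 ≤ a ≤ n`, the map
`d_{a,n} : V_a^n → (V_{n-a}^n)^*` is bijective, hence an isomorphism of `𝔸`-vector
spaces (and of `U_q(sl_n)`-modules, by STATEMENT 7). -/
theorem statement8 (n : ℕ) (hn : 1 ≤ n) (a : ℕ) (ha : a ≤ n) :
    Function.Bijective (dmap n a (n-a)) :=
  statement8_general n a ha
end
end

section
/- For every n ≥ 1 and 0 ≤ a ≤ n, the operator ∏_{j=1}^{n−1} K_j^j on V_a^n equals q^{n−a} i_{−1} p_{−1} + q^{−a} i_0 p_0; that is, it acts by the scalar q^{n−a} on the summand V_{a−1}^{n−1} and by the scalar q^{−a} on the summand V_a^{n−1}. -/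
noncomputable section

open scoped TensorProduct

set_option maxHeartbeats 1000000
set_option synthInstance.maxHeartbeats 400000

/-! In the subset basis every `K_i` is diagonal: with elements numbered from `0`, it scales a
subset `s` by `q ^ ([i ∈ s] - [i - 1 ∈ s])`, which survives the recursion because the new top
element never lies in `{i - 1, i}`. Hence `∏ K_j ^ j` scales `s` by `q` to the power
`∑ j ([j ∈ s] - [j - 1 ∈ s])`, and summation by parts turns this into `n [n - 1 ∈ s] - |s|`. -/

def memIndicator (s : Finset ℕ) (j : ℕ) : ℤ := if j ∈ s then 1 else 0

lemma memIndicator_erase_of_ne {s : Finset ℕ} {j m : ℕ} (h : j ≠ m) :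
    memIndicator (s.erase m) j = memIndicator s j := by
  simp [memIndicator, Finset.mem_erase, h]

lemma sum_range_memIndicator {s : Finset ℕ} {n : ℕ} (hs : s ⊆ Finset.range n) :
    ∑ j ∈ Finset.range n, memIndicator s j = s.card := by
  simp only [memIndicator]
  rw [Finset.sum_boole, Finset.filter_mem_eq_inter, Finset.inter_eq_right.mpr hs]

lemma sum_range_succ_mul_sub {R : Type*} [CommRing R] (χ : ℕ → R) (m : ℕ) :
    ∑ j ∈ Finset.range m, ((j : R) + 1) * (χ (j + 1) - χ j)
      = m * χ m - ∑ j ∈ Finset.range m, χ j := by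
  induction m with
  | zero => simp
  | succ m ih =>
    rw [Finset.sum_range_succ, ih, Finset.sum_range_succ (f := χ)]
    push_cast
    ring

lemma sum_mul_memIndicator_sub {s : Finset ℕ} {n : ℕ} (hn : 1 ≤ n) (hs : s ⊆ Finset.range n) :
    ∑ i : Fin (n - 1), ((i : ℤ) + 1) * (memIndicator s (i + 1) - memIndicator s i)
      = n * memIndicator s (n - 1) - s.card := by
  have hsplit := Finset.sum_range_succ (memIndicator s) (n - 1)
  rw [Nat.sub_add_cancel hn, sum_range_memIndicator hs] at hsplit
  rw [Fin.sum_univ_eq_sum_range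
      (fun i => ((i : ℤ) + 1) * (memIndicator s (i + 1) - memIndicator s i)),
    sum_range_succ_mul_sub, Nat.cast_sub hn, hsplit]
  ring

lemma prod_zpow_eq_zpow_sum {ι G₀ : Type*} [CommGroupWithZero G₀] {x : G₀} (hx : x ≠ 0)
    (s : Finset ι) (f : ι → ℤ) : ∏ i ∈ s, x ^ f i = x ^ ∑ i ∈ s, f i := by
  induction s using Finset.cons_induction with
  | empty => simp
  | cons i s hi ih => rw [Finset.prod_cons, Finset.sum_cons, ih, zpow_add₀ hx]

def diagEnd (n a : ℕ) (w : Finset ℕ → A) : Module.End A (V n a) :=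
  Algebra.lmul A (V n a) fun s => w s.1

@[simp]
lemma diagEnd_apply (n a : ℕ) (w : Finset ℕ → A) (f : V n a) (s : BS n a) :
    diagEnd n a w f s = w s.1 * f s := rfl

lemma diagEnd_congr {n a : ℕ} {w w' : Finset ℕ → A} (h : ∀ s : BS n a, w s.1 = w' s.1) :
    diagEnd n a w = diagEnd n a w' :=
  LinearMap.ext fun f => funext fun s => by simp [h s]

lemma diagEnd_eq_one {n a : ℕ} {w : Finset ℕ → A} (h : ∀ s : BS n a, w s.1 = 1) :
    diagEnd n a w = 1 :=
  LinearMap.ext fun f => funext fun s => by simp [h s]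

lemma diagOp_eq_diagEnd (n a m : ℕ) (x y : A) :
    diagOp n a m x y = diagEnd n a fun s => if m ∈ s then x else y := rfl

lemma diagEnd_pow (n a : ℕ) (w : Finset ℕ → A) (k : ℕ) :
    diagEnd n a w ^ k = diagEnd n a (w ^ k) :=
  (map_pow _ _ _).symm

lemma list_prod_ofFn_diagEnd (n a : ℕ) {m : ℕ} (w : Fin m → Finset ℕ → A) :
    (List.ofFn fun i => diagEnd n a (w i)).prod = diagEnd n a fun s => ∏ i, w i s := by
  have h := map_list_prod (Algebra.lmul A (V n a)) (List.ofFn fun i (s : BS n a) => w i s.1)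
  rw [List.map_ofFn, List.prod_ofFn, Finset.prod_fn] at h
  exact h.symm

lemma iminus_diagEnd_pminus_add_izero_diagEnd_pzero (n a : ℕ) (u v : Finset ℕ → A) :
    iminus n a ∘ₗ diagEnd n a u ∘ₗ pminus n a + izero n (a + 1) ∘ₗ diagEnd n (a + 1) v ∘ₗ
        pzero n (a + 1)
      = diagEnd (n + 1) (a + 1) fun s => if n ∈ s then u (s.erase n) else v s := by
  refine LinearMap.ext fun f => funext fun s => ?_
  by_cases hs : n ∈ s.1
  · simp [iminus, izero, pminus, hs, Finset.insert_erase hs]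
  · simp [iminus, izero, pzero, hs]

def kWeight (i : ℕ) (s : Finset ℕ) : A := qq ^ (memIndicator s i - memIndicator s (i - 1))

lemma KOp_eq_diagEnd (n a i : ℕ) (hi : 1 ≤ i) (hin : i + 1 ≤ n) (ha : a ≤ n) :
    KOp n a i = diagEnd n a (kWeight i) := by
  induction n, a, i using KOp.induct with
  | case1 | case2 => omega
  | case3 i n =>
    refine (diagEnd_eq_one fun s => ?_).symm
    simp [kWeight, memIndicator, Finset.card_eq_zero.mp s.2.2]
  | case4 n a i hfull =>
    rw [KOp, if_pos hfull]
    refine (diagEnd_eq_one fun s => ?_).symm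
    have hs : s.1 = Finset.range (n + 2) :=
      Finset.eq_of_subset_of_card_le s.2.1 (by rw [s.2.2, Finset.card_range]; omega)
    simp [kWeight, memIndicator, hs, show i < n + 2 by omega, show i - 1 < n + 2 by omega]
  | case5 n a hfull =>
    rw [KOp, if_neg hfull, if_pos rfl, diagOp_eq_diagEnd, diagOp_eq_diagEnd,
      iminus_diagEnd_pminus_add_izero_diagEnd_pzero]
    congr 1
    funext s
    by_cases h₁ : n + 1 ∈ s <;> by_cases h₀ : n ∈ s <;>
      simp [kWeight, memIndicator, h₁, h₀]
  | case6 n a i hfull hlow ih₁ ih₂ =>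
    rw [KOp, if_neg hfull, if_neg hlow, ih₁ hi (by omega) (by omega), ih₂ hi (by omega) (by omega),
      iminus_diagEnd_pminus_add_izero_diagEnd_pzero]
    congr 1
    funext s
    split_ifs
    · simp only [kWeight, memIndicator_erase_of_ne (show i ≠ n + 1 by omega),
        memIndicator_erase_of_ne (show i - 1 ≠ n + 1 by omega)]
    · rfl

lemma kjOp_eq_diagEnd (n a : ℕ) (hn : 1 ≤ n) (ha : a ≤ n) :
    kjOp n a = diagEnd n a fun s => qq ^ ((n : ℤ) * memIndicator s (n - 1) - s.card) := by
  have hK (i : Fin (n - 1)) : KOp n a (i + 1) = diagEnd n a (kWeight (i + 1)) :=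
    KOp_eq_diagEnd n a (i + 1) (by omega) (by omega) ha
  simp only [kjOp, hK, diagEnd_pow, list_prod_ofFn_diagEnd]
  refine diagEnd_congr fun s => ?_
  simp only [Pi.pow_apply, kWeight, ← zpow_natCast, ← zpow_mul]
  rw [prod_zpow_eq_zpow_sum RatFunc.X_ne_zero, ← sum_mul_memIndicator_sub hn s.2.1]
  congr 1
  refine Finset.sum_congr rfl fun i _ => ?_
  rw [Nat.add_sub_cancel]
  push_cast
  ring

/-- for every `n ≥ 1` and `0 ≤ a ≤ n`, the operator `∏_{j=1}^{n-1} K_j^j` on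
`V_a^n` equals `q^{n-a} i₋₁ p₋₁ + q^{-a} i₀ p₀`, i.e. it acts by the scalar `q^{n-a}` on
the summand `V_{a-1}^{n-1}` (basis subsets containing the top element) and by `q^{-a}` on
the summand `V_a^{n-1}`. -/
theorem statement9 (n : ℕ) (hn : 1 ≤ n) (a : ℕ) (ha : a ≤ n) :
    kjOp n a = diagOp n a (n-1) (qq ^ ((n : ℤ) - (a : ℤ))) (qq ^ (-(a : ℤ))) ∧
    ∀ (f : V n a) (s : BS n a),
      kjOp n a f s
        = (if n-1 ∈ s.1 then qq ^ ((n : ℤ) - (a : ℤ)) else qq ^ (-(a : ℤ))) * f s := by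
  have hkj : kjOp n a = diagOp n a (n-1) (qq ^ ((n : ℤ) - (a : ℤ))) (qq ^ (-(a : ℤ))) := by
    rw [kjOp_eq_diagEnd n a hn ha, diagOp_eq_diagEnd]
    refine diagEnd_congr fun s => ?_
    by_cases h : n - 1 ∈ s.1 <;> simp [memIndicator, h, s.2.2, sub_eq_add_neg]
  exact ⟨hkj, fun f s => by rw [hkj]; rfl⟩
end
end

section
/- For every n ≥ 1 and 0 ≤ a ≤ n, the operator τ_n = ∏_{j=1}^{n−1} K_j^{j(n−j)} on V_a^n satisfies τ_n = q^{n−a} i_{−1} τ_{n−1} p_{−1} + q^{−a} i_0 τ_{n−1} p_0, where τ_{n−1} = ∏_{j=1}^{n−2} K_j^{j(n−1−j)} acts on V_{a−1}^{n−1} and V_a^{n−1} respectively. -/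
noncomputable section

open scoped TensorProduct

set_option maxHeartbeats 1000000
set_option synthInstance.maxHeartbeats 400000

/-! Every `K_j` is diagonal in the subset basis: it multiplies the basis vector of `s` by
`q ^ ([j ∈ s] - [j - 1 ∈ s])` (elements counted from `0`), as one checks against the
recursion. Hence `τ_n` multiplies it by `q ^ E_n(s)` with
`E_n(s) = ∑_{j=1}^{n-1} j (n - j) ([j ∈ s] - [j - 1 ∈ s])`, and summation by parts gives
`E_{n+1}(s) = E_n(s \ {n}) + n [n ∈ s] - |s \ {n}|`, which are exactly the factors `q^{n-a}`
and `q^{-a}` of the two summands. -/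

open Finset

abbrev mulOp (n a : ℕ) (u : Finset ℕ → A) : Module.End A (V n a) :=
  Algebra.lmul A (V n a) fun s => u s.1

lemma mulOp_apply (n a : ℕ) (u : Finset ℕ → A) (f : V n a) (s : BS n a) :
    mulOp n a u f s = u s.1 * f s := rfl

lemma mulOp_congr {n a : ℕ} {u v : Finset ℕ → A} (h : ∀ s : BS n a, u s.1 = v s.1) :
    mulOp n a u = mulOp n a v := by
  simp only [mulOp]
  congr 1
  funext s
  exact h s

lemma mulOp_eq_one {n a : ℕ} {u : Finset ℕ → A} (h : ∀ s : BS n a, u s.1 = 1) :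
    mulOp n a u = 1 := by
  rw [mulOp, ← map_one (Algebra.lmul A (V n a))]
  congr 1
  funext s
  exact h s

lemma diagOp_eq_mulOp (n a m : ℕ) (x y : A) :
    diagOp n a m x y = mulOp n a fun s => if m ∈ s then x else y := rfl

lemma smul_comp_mulOp_comp {M N : Type*} [AddCommGroup M] [Module A M] [AddCommGroup N]
    [Module A N] {n a : ℕ} (c : A) (f : V n a →ₗ[A] N) (u : Finset ℕ → A) (g : M →ₗ[A] V n a) :
    c • (f ∘ₗ mulOp n a u ∘ₗ g) = f ∘ₗ (mulOp n a fun s => c * u s) ∘ₗ g := by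
  have : c • mulOp n a u = mulOp n a fun s => c * u s := by rw [mulOp, ← map_smul]; rfl
  rw [← this, LinearMap.smul_comp, LinearMap.comp_smul]

theorem iminus_mulOp_pminus_add_izero_mulOp_pzero (n a : ℕ) (u v : Finset ℕ → A) :
    iminus n a ∘ₗ mulOp n a u ∘ₗ pminus n a
        + izero n (a + 1) ∘ₗ mulOp n (a + 1) v ∘ₗ pzero n (a + 1)
      = mulOp (n + 1) (a + 1) fun s => if n ∈ s then u (s.erase n) else v s := by
  refine LinearMap.ext fun f => funext fun s => ?_
  by_cases h : n ∈ s.1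
  · simp [iminus, izero, pminus, mulOp_apply, h, insert_erase h]
  · simp [iminus, izero, pzero, mulOp_apply, h]

lemma BS.val_eq_empty {n : ℕ} (s : BS n 0) : s.1 = ∅ :=
  card_eq_zero.mp s.2.2

lemma BS.val_eq_range {n : ℕ} (s : BS n n) : s.1 = range n :=
  eq_of_subset_of_card_le s.2.1 (by rw [s.2.2, card_range])

lemma izero_comp_pzero_zero (n : ℕ) : izero n 0 ∘ₗ pzero n 0 = 1 := by
  refine LinearMap.ext fun f => funext fun s => ?_
  exact dif_neg (by simp [s.val_eq_empty])

def kExponent (i : ℕ) (s : Finset ℕ) : ℤ :=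
  (if i ∈ s then 1 else 0) - (if i - 1 ∈ s then 1 else 0)

@[simp] lemma kExponent_empty (i : ℕ) : kExponent i ∅ = 0 := by
  simp [kExponent]

lemma kExponent_range {i n : ℕ} (h1 : 1 ≤ i) (h2 : i < n) : kExponent i (range n) = 0 := by
  simp [kExponent, h2, show i - 1 < n by omega]

lemma kExponent_erase {i n : ℕ} (h : i < n) (s : Finset ℕ) :
    kExponent i (s.erase n) = kExponent i s := by
  simp [kExponent, h.ne, show i - 1 ≠ n by omega]

theorem KOp_eq_mulOp (n a i : ℕ) (h1 : 1 ≤ i) (h2 : i < n) :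
    KOp n a i = mulOp n a fun s => qq ^ kExponent i s := by
  fun_induction KOp n a i with
  | case1 | case2 => omega
  | case3 => exact (mulOp_eq_one fun s => by simp [s.val_eq_empty]).symm
  | case4 n a i h =>
    obtain rfl : a = n + 1 := by omega
    exact (mulOp_eq_one fun s => by simp [s.val_eq_range, kExponent_range h1 h2]).symm
  | case5 n a =>
    rw [diagOp_eq_mulOp, diagOp_eq_mulOp, iminus_mulOp_pminus_add_izero_mulOp_pzero]
    refine mulOp_congr fun s => ?_
    by_cases h : n + 1 ∈ s.1 <;> by_cases h' : n ∈ s.1 <;> simp [kExponent, h, h']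
  | case6 n a i _ hi ih2 ih1 =>
    rw [ih2 h1 (by omega), ih1 h1 (by omega), iminus_mulOp_pminus_add_izero_mulOp_pzero]
    refine mulOp_congr fun s => ?_
    split_ifs <;> simp [kExponent_erase (show i < n + 1 by omega)]

theorem zpow_sum₀ {ι G₀ : Type*} [CommGroupWithZero G₀] {x : G₀} (hx : x ≠ 0)
    (s : Finset ι) (e : ι → ℤ) : x ^ ∑ i ∈ s, e i = ∏ i ∈ s, x ^ e i := by
  classical
  induction s using Finset.induction_on with
  | empty => simp
  | insert i s hi ih => rw [sum_insert hi, prod_insert hi, zpow_add₀ hx, ih]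

lemma qq_ne_zero : qq ≠ 0 := RatFunc.X_ne_zero

def tauExponent (n : ℕ) (s : Finset ℕ) : ℤ :=
  ∑ j ∈ range (n - 1), (((j + 1) * (n - (j + 1)) : ℕ) : ℤ) * kExponent (j + 1) s

@[simp] lemma tauExponent_empty (n : ℕ) : tauExponent n ∅ = 0 := by
  simp [tauExponent]

theorem tauOp_eq_mulOp (n a : ℕ) : tauOp n a = mulOp n a fun s => qq ^ tauExponent n s := by
  have hK : (List.ofFn fun i : Fin (n - 1) => KOp n a (i + 1) ^ ((i + 1) * (n - (i + 1))))
      = (List.ofFn fun i : Fin (n - 1) =>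
          (fun s : BS n a => qq ^ kExponent (i + 1) s.1) ^ ((i + 1) * (n - (i + 1)))).map
        (Algebra.lmul A (V n a)) := by
    rw [List.map_ofFn]
    congr 1
    funext i
    rw [Function.comp_apply, map_pow, KOp_eq_mulOp n a _ le_add_self (by omega)]
  rw [tauOp, hK, ← map_list_prod, List.prod_ofFn]
  congr 1
  funext s
  simp only [prod_apply, Pi.pow_apply, tauExponent, zpow_sum₀ qq_ne_zero,
    ← Fin.prod_univ_eq_prod_range, ← zpow_natCast, ← zpow_mul, mul_comm]

lemma tauExponent_succ (n : ℕ) (s : Finset ℕ) :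
    tauExponent (n + 1) s
      = tauExponent n s + ∑ j ∈ range n, ((j : ℤ) + 1) * kExponent (j + 1) s := by
  have hlast : tauExponent n s
      = ∑ j ∈ range n, (((j + 1) * (n - (j + 1)) : ℕ) : ℤ) * kExponent (j + 1) s := by
    cases n with
    | zero => rfl
    | succ m => simp [tauExponent, sum_range_succ]
  rw [hlast, tauExponent, Nat.add_sub_cancel, ← sum_add_distrib]
  refine sum_congr rfl fun j hj => ?_
  rw [show n + 1 - (j + 1) = n - (j + 1) + 1 by have := mem_range.mp hj; omega]
  push_cast
  ring

lemma sum_range_mul_kExponent (n : ℕ) (s : Finset ℕ) :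
    ∑ j ∈ range n, ((j : ℤ) + 1) * kExponent (j + 1) s
      = n * (if n ∈ s then 1 else 0) - ∑ j ∈ range n, (if j ∈ s then 1 else 0) := by
  induction n with
  | zero => simp
  | succ n ih =>
    rw [sum_range_succ, ih, sum_range_succ (fun j => if j ∈ s then (1 : ℤ) else 0)]
    simp only [kExponent, Nat.add_sub_cancel]
    push_cast
    ring

lemma sum_range_indicator {n : ℕ} {s : Finset ℕ} (hs : s ⊆ range (n + 1)) :
    ∑ j ∈ range n, (if j ∈ s then 1 else 0 : ℤ) = #(s.erase n) := by
  rw [sum_boole]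
  congr 2
  ext j
  have := @hs j
  simp only [mem_range, mem_filter, mem_erase] at this ⊢
  grind

lemma tauExponent_erase (n : ℕ) (s : Finset ℕ) : tauExponent n (s.erase n) = tauExponent n s :=
  sum_congr rfl fun j hj => by rw [kExponent_erase (by have := mem_range.mp hj; omega)]

theorem tauExponent_succ_eq {n : ℕ} {s : Finset ℕ} (hs : s ⊆ range (n + 1)) :
    tauExponent (n + 1) s
      = tauExponent n (s.erase n) + n * (if n ∈ s then 1 else 0) - #(s.erase n) := by
  rw [tauExponent_succ, sum_range_mul_kExponent, sum_range_indicator hs, tauExponent_erase]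
  ring

/-- for every `n ≥ 1` and `0 ≤ a ≤ n`, the pivotal operator
`τ_n = ∏_{j=1}^{n-1} K_j^{j(n-j)}` on `V_a^n` satisfies
`τ_n = q^{n-a} i₋₁ τ_{n-1} p₋₁ + q^{-a} i₀ τ_{n-1} p₀`.
The first conjunct covers all `1 ≤ a ≤ n` (with rank `n+1` and index `a+1`); the second
covers `a = 0`, where the summand `V_{-1}^{n-1}` is zero and the corresponding term of the
formula vanishes. -/
theorem statement10 :
    (∀ n a : ℕ, a + 1 ≤ n + 1 →
      tauOp (n+1) (a+1)
        = qq ^ (((n : ℤ) + 1) - ((a : ℤ) + 1)) • (iminus n a ∘ₗ tauOp n a ∘ₗ pminus n a)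
          + qq ^ (-((a : ℤ) + 1)) •
              (izero n (a+1) ∘ₗ tauOp n (a+1) ∘ₗ pzero n (a+1))) ∧
    (∀ n : ℕ,
      tauOp (n+1) 0
        = qq ^ (-(0 : ℤ)) • (izero n 0 ∘ₗ tauOp n 0 ∘ₗ pzero n 0)) := by
  refine ⟨fun n a _ => ?_, fun n => ?_⟩
  · rw [tauOp_eq_mulOp, tauOp_eq_mulOp, tauOp_eq_mulOp, smul_comp_mulOp_comp,
      smul_comp_mulOp_comp, iminus_mulOp_pminus_add_izero_mulOp_pzero]
    refine mulOp_congr fun s => ?_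
    rw [tauExponent_succ_eq s.2.1]
    split_ifs with h
    · rw [← zpow_add₀ qq_ne_zero, card_erase_of_mem h, s.2.2]
      congr 1
      push_cast
      ring
    · rw [← zpow_add₀ qq_ne_zero, erase_eq_of_notMem h, s.2.2]
      congr 1
      push_cast
      ring
  · rw [tauOp_eq_mulOp, tauOp_eq_mulOp, mulOp_eq_one, mulOp_eq_one, neg_zero, zpow_zero, one_smul]
    · exact (izero_comp_pzero_zero n).symm
    all_goals intro s; simp [s.val_eq_empty]

end
end
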